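/- arXiv:2309.05288 — 8 statements merged into one kernel-verified Lean document; each statement's English description precedes it below -/
import Mathlib

section
/- Let F be a finite field of characteristic p, let C be a linear code of length n over F, and let σ be a permutation automorphism of C of order m with p not dividing m. Then C is the internal direct sum of its fixed subcode and its even-sum subcode, i.e. C = F_σ(C) ⊕ E_σ(C) (meaning F_σ(C) + E_σ(C) = C and F_σ(C) ∩ E_σ(C) = {0}), and both F_σ(C) and E_σ(C) are invariant under σ. -/
open Finset

/-- The action of a permutation `σ` on vectors by permuting coordinates: `(vσ) i = v (σ i)`. -/
def permAct {F : Type*} {n : ℕ} (σ : Equiv.Perm (Fin n)) (v : Fin n → F) : Fin n → F :=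
  fun i => v (σ i)

open Classical in
/-- The cycle (orbit) of `σ` containing the coordinate `i`, as a `Finset`
(fixed points are counted as cycles of length 1). -/
noncomputable def orbitOf {n : ℕ} (σ : Equiv.Perm (Fin n)) (i : Fin n) : Finset (Fin n) :=
  Finset.univ.filter (fun j => σ.SameCycle i j)

/-- The Euclidean inner product `u·v = ∑ i, u i * v i`. -/
def eInner {F : Type*} [Field F] {ι : Type*} [Fintype ι] (u v : ι → F) : F :=
  ∑ i, u i * v i

/-- The Euclidean dual of a set of vectors. -/
def dualSet {F : Type*} [Field F] {ι : Type*} [Fintype ι] (S : Set (ι → F)) : Set (ι → F) :=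
  {u | ∀ v ∈ S, eInner u v = 0}

/-- A set of vectors is self-orthogonal if it is contained in its dual. -/
def IsSelfOrthogonalSet {F : Type*} [Field F] {ι : Type*} [Fintype ι] (S : Set (ι → F)) : Prop :=
  S ⊆ dualSet S

/-- A set of vectors is self-dual if it equals its dual. -/
def IsSelfDualSet {F : Type*} [Field F] {ι : Type*} [Fintype ι] (S : Set (ι → F)) : Prop :=
  S = dualSet S

/-- A set of vectors is LCD (linear complementary dual) if it meets its dual only in `0`. -/
def IsLCDSet {F : Type*} [Field F] {ι : Type*} [Fintype ι] (S : Set (ι → F)) : Prop :=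
  S ∩ dualSet S = {0}

/-- The fixed subcode `F_σ(C) = {v ∈ C : vσ = v}`. -/
def fixedCode {F : Type*} [Field F] {n : ℕ} (σ : Equiv.Perm (Fin n))
    (C : Submodule F (Fin n → F)) : Set (Fin n → F) :=
  {v | v ∈ C ∧ permAct σ v = v}

/-- The subcode `E_σ(C) = {v ∈ C : the sum of the coordinates of v over each cycle of σ is 0}`. -/
def evenCode {F : Type*} [Field F] {n : ℕ} (σ : Equiv.Perm (Fin n))
    (C : Submodule F (Fin n → F)) : Set (Fin n → F) :=
  {v | v ∈ C ∧ ∀ i : Fin n, ∑ j ∈ orbitOf σ i, v j = 0}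

/-!
Averaging over the cyclic group generated by `σ` is possible because its order `m` is invertible
in `F`: the average `w = m⁻¹ ∑_{k<m} vσᵏ` of a codeword `v` is a σ-fixed codeword with the same
cycle sums as `v`, so `v = w + (v - w)` splits `v`. A fixed vector is constant on each cycle `Ω`,
so its cycle sum is `|Ω| v_i`; since `|Ω|` divides `m`, it is a unit in `F`, and a fixed vector
with zero cycle sums vanishes.
-/

theorem Finset.sum_range_succ_eq_sum_range_of_eq {M : Type*} [AddCancelCommMonoid M]
    (f : ℕ → M) {m : ℕ} (h : f m = f 0) :
    ∑ k ∈ range m, f (k + 1) = ∑ k ∈ range m, f k :=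
  add_right_cancel (b := f 0) (by rw [← sum_range_succ', sum_range_succ, h])

section PermAct

variable {F : Type*} {n : ℕ} (σ : Equiv.Perm (Fin n))

theorem permAct_pow_succ (k : ℕ) (v : Fin n → F) :
    permAct (σ ^ (k + 1)) v = permAct σ (permAct (σ ^ k) v) := by
  rw [pow_succ]
  rfl

theorem permAct_pow_mem {S : Set (Fin n → F)} (hS : ∀ v ∈ S, permAct σ v ∈ S) (k : ℕ)
    {v : Fin n → F} (hv : v ∈ S) : permAct (σ ^ k) v ∈ S := by
  induction k with
  | zero => exact hv
  | succ k ih => exact permAct_pow_succ σ k v ▸ hS _ ih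

theorem permAct_pow_of_permAct_eq {v : Fin n → F} (hv : permAct σ v = v) (k : ℕ) :
    permAct (σ ^ k) v = v := by
  induction k with
  | zero => rfl
  | succ k ih => rw [permAct_pow_succ, ih, hv]

theorem apply_eq_of_permAct_eq_of_sameCycle {v : Fin n → F} (hv : permAct σ v = v)
    {i j : Fin n} (hij : σ.SameCycle i j) : v j = v i := by
  obtain ⟨k, -, rfl⟩ := hij.exists_pow_eq'
  exact congrFun (permAct_pow_of_permAct_eq σ hv k) i

end PermAct

section Orbit

variable {n : ℕ} (σ : Equiv.Perm (Fin n))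

theorem mem_orbitOf {i j : Fin n} : j ∈ orbitOf σ i ↔ σ.SameCycle i j := by
  simp [orbitOf]

theorem isCycleOn_orbitOf (i : Fin n) : σ.IsCycleOn (orbitOf σ i : Set (Fin n)) :=
  ⟨Equiv.bijOn σ fun j => by simp [mem_orbitOf, Equiv.Perm.sameCycle_apply_right],
    fun j hj k hk => ((mem_orbitOf σ).1 hj).symm.trans ((mem_orbitOf σ).1 hk)⟩

theorem card_orbitOf_dvd {m : ℕ} (hσm : σ ^ m = 1) (i : Fin n) : #(orbitOf σ i) ∣ m :=
  ((isCycleOn_orbitOf σ i).pow_apply_eq ((mem_orbitOf σ).2 (.refl σ i))).1 (by simp [hσm])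

theorem sum_orbitOf_permAct_pow {M : Type*} [AddCommMonoid M] (k : ℕ) (v : Fin n → M)
    (i : Fin n) : ∑ j ∈ orbitOf σ i, permAct (σ ^ k) v j = ∑ j ∈ orbitOf σ i, v j :=
  sum_equiv (σ ^ k) (fun j => by simp [mem_orbitOf, Equiv.Perm.sameCycle_pow_right])
    fun _ _ => rfl

theorem sum_orbitOf_of_permAct_eq {M : Type*} [AddCommMonoid M] {v : Fin n → M}
    (hv : permAct σ v = v) (i : Fin n) : ∑ j ∈ orbitOf σ i, v j = #(orbitOf σ i) • v i := by
  rw [sum_congr rfl fun j hj =>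
      apply_eq_of_permAct_eq_of_sameCycle σ hv ((mem_orbitOf σ).1 hj), sum_const]

end Orbit

section Average

variable {F : Type*} [Field F] {n : ℕ} (σ : Equiv.Perm (Fin n)) (m : ℕ)

noncomputable def permAverage (v : Fin n → F) : Fin n → F :=
  (m : F)⁻¹ • ∑ k ∈ range m, permAct (σ ^ k) v

variable {σ m}

theorem permAverage_mem {C : Submodule F (Fin n → F)} (hC : ∀ v ∈ C, permAct σ v ∈ C)
    {v : Fin n → F} (hv : v ∈ C) : permAverage σ m v ∈ C :=
  C.smul_mem _ (C.sum_mem fun k _ => permAct_pow_mem σ hC k hv)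

theorem permAct_permAverage (hσm : σ ^ m = 1) (v : Fin n → F) :
    permAct σ (permAverage σ m v) = permAverage σ m v := by
  funext i
  simp only [permAverage, permAct, Pi.smul_apply, Finset.sum_apply, smul_eq_mul]
  congr 1
  simp_rw [← Equiv.Perm.mul_apply, ← pow_succ]
  exact sum_range_succ_eq_sum_range_of_eq (fun k => v ((σ ^ k) i)) (by simp [hσm])

theorem sum_orbitOf_permAverage (hmF : (m : F) ≠ 0) (v : Fin n → F) (i : Fin n) :
    ∑ j ∈ orbitOf σ i, permAverage σ m v j = ∑ j ∈ orbitOf σ i, v j := by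
  simp only [permAverage, Pi.smul_apply, Finset.sum_apply, smul_eq_mul]
  rw [← mul_sum, sum_comm, sum_congr rfl fun k _ => sum_orbitOf_permAct_pow σ k v i,
    sum_const, card_range, nsmul_eq_mul, inv_mul_cancel_left₀ hmF]

end Average

section Decomposition

variable {F : Type*} [Field F] {n m : ℕ} {σ : Equiv.Perm (Fin n)}
  {C : Submodule F (Fin n → F)}

theorem exists_fixedCode_add_evenCode (hσm : σ ^ m = 1) (hmF : (m : F) ≠ 0)
    (hC : ∀ v ∈ C, permAct σ v ∈ C) {v : Fin n → F} (hv : v ∈ C) :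
    ∃ w ∈ fixedCode σ C, ∃ x ∈ evenCode σ C, v = w + x := by
  have hw := permAverage_mem (m := m) hC hv
  refine ⟨permAverage σ m v, ⟨hw, permAct_permAverage hσm v⟩, v - permAverage σ m v,
    ⟨C.sub_mem hv hw, fun i => ?_⟩, (add_sub_cancel _ _).symm⟩
  simp only [Pi.sub_apply, sum_sub_distrib, sum_orbitOf_permAverage hmF, sub_self]

theorem eq_zero_of_mem_fixedCode_of_mem_evenCode (hσm : σ ^ m = 1) (hmF : (m : F) ≠ 0)
    {v : Fin n → F} (hfix : v ∈ fixedCode σ C) (heven : v ∈ evenCode σ C) : v = 0 := by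
  funext i
  have hcard : (#(orbitOf σ i) : F) ≠ 0 :=
    ne_zero_of_dvd_ne_zero hmF (Nat.cast_dvd_cast (card_orbitOf_dvd σ hσm i))
  have hsum := heven.2 i
  rw [sum_orbitOf_of_permAct_eq σ hfix.2, nsmul_eq_mul] at hsum
  exact (mul_eq_zero.1 hsum).resolve_left hcard

theorem fixedCode_inter_evenCode (hσm : σ ^ m = 1) (hmF : (m : F) ≠ 0) :
    fixedCode σ C ∩ evenCode σ C = {0} := by
  refine Set.eq_singleton_iff_unique_mem.2 ⟨⟨⟨C.zero_mem, rfl⟩, C.zero_mem, fun i => ?_⟩,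
    fun v hv => eq_zero_of_mem_fixedCode_of_mem_evenCode hσm hmF hv.1 hv.2⟩
  simp

theorem permAct_mem_fixedCode {v : Fin n → F} (hv : v ∈ fixedCode σ C) :
    permAct σ v ∈ fixedCode σ C := by
  rwa [hv.2]

theorem permAct_mem_evenCode (hC : ∀ v ∈ C, permAct σ v ∈ C) {v : Fin n → F}
    (hv : v ∈ evenCode σ C) : permAct σ v ∈ evenCode σ C :=
  ⟨hC v hv.1, fun i => by
    simpa only [pow_one] using (sum_orbitOf_permAct_pow σ 1 v i).trans (hv.2 i)⟩

end Decomposition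

theorem code_decomposition_fixed_even_general {F : Type*} [Field F] (p : ℕ) [CharP F p]
    {n m : ℕ} (σ : Equiv.Perm (Fin n)) (hord : orderOf σ = m) (hm : ¬ p ∣ m)
    (C : Submodule F (Fin n → F)) (hC : ∀ v, v ∈ C ↔ permAct σ v ∈ C) :
    (∀ v ∈ C, ∃ w ∈ fixedCode σ C, ∃ x ∈ evenCode σ C, v = w + x) ∧
    (fixedCode σ C ∩ evenCode σ C = {0}) ∧
    (∀ v ∈ fixedCode σ C, permAct σ v ∈ fixedCode σ C) ∧
    (∀ v ∈ evenCode σ C, permAct σ v ∈ evenCode σ C) := by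
  have hσm : σ ^ m = 1 := hord ▸ pow_orderOf_eq_one σ
  have hmF : (m : F) ≠ 0 := fun h => hm ((CharP.cast_eq_zero_iff F p m).1 h)
  have hCσ : ∀ v ∈ C, permAct σ v ∈ C := fun v => (hC v).1
  exact ⟨fun _ => exists_fixedCode_add_evenCode hσm hmF hCσ, fixedCode_inter_evenCode hσm hmF,
    fun _ => permAct_mem_fixedCode, fun _ => permAct_mem_evenCode hCσ⟩

/-- If `C` is a linear code over a finite field `F` of characteristic `p`
with a permutation automorphism `σ` of order `m` where `p ∤ m`, then
`C = F_σ(C) ⊕ E_σ(C)` (every codeword splits, and the two subcodes meet only in `0`),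
and both subcodes are `σ`-invariant. -/
theorem code_decomposition_fixed_even {F : Type*} [Field F] [Fintype F] (p : ℕ) [CharP F p]
    {n m : ℕ} (σ : Equiv.Perm (Fin n)) (hord : orderOf σ = m) (hm : ¬ p ∣ m)
    (C : Submodule F (Fin n → F)) (hC : ∀ v, v ∈ C ↔ permAct σ v ∈ C) :
    (∀ v ∈ C, ∃ w ∈ fixedCode σ C, ∃ x ∈ evenCode σ C, v = w + x) ∧
    (fixedCode σ C ∩ evenCode σ C = {0}) ∧
    (∀ v ∈ fixedCode σ C, permAct σ v ∈ fixedCode σ C) ∧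
    (∀ v ∈ evenCode σ C, permAct σ v ∈ evenCode σ C) :=
  code_decomposition_fixed_even_general p σ hord hm C hC
end

section
/- Let F be a finite field with r² elements, where r is a power of the characteristic p, with conjugation a ↦ ā = a^r. Let C be a linear code of length n over F and let σ be a permutation automorphism of C. Then E_σ(C) and F_σ(C) are orthogonal with respect to the Hermitian inner product: for every v ∈ E_σ(C) and every w ∈ F_σ(C), one has (v,w) = Σ_{i=1}^n v_i (w_i)^r = 0. -/
/-!
A vector `w` fixed by `σ` is constant on every cycle `Ω` of `σ`, so the Hermitian product
`(v, w)` splits as `∑_Ω (∑_{i ∈ Ω} v i) * (w_Ω)^r`, and every inner sum vanishes for `v ∈ E_σ(C)`.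
-/

open Finset

theorem Equiv.Perm.SameCycle.apply_eq_of_comp_eq {α β : Type*} [Finite α] {σ : Equiv.Perm α}
    {g : α → β} (hg : g ∘ σ = g) {i j : α} (h : σ.SameCycle i j) : g j = g i := by
  obtain ⟨k, rfl⟩ := h.exists_nat_pow_eq
  rw [Equiv.Perm.coe_pow]
  exact congrFun (Function.iterate_invariant hg k) i

theorem sum_mul_eq_zero_of_sum_orbitOf_eq_zero {R : Type*} [NonUnitalNonAssocSemiring R] {n : ℕ}
    (σ : Equiv.Perm (Fin n)) {v g : Fin n → R} (hv : ∀ i, ∑ j ∈ orbitOf σ i, v j = 0)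
    (hg : ∀ i j, σ.SameCycle i j → g j = g i) : ∑ i, v i * g i = 0 := by
  classical
  let cycle : Fin n → Quotient (Equiv.Perm.SameCycle.setoid σ) := Quotient.mk _
  rw [← Finset.sum_fiberwise (univ : Finset (Fin n)) cycle]
  refine Finset.sum_eq_zero fun c _ => ?_
  obtain ⟨i, rfl⟩ := Quotient.exists_rep c
  have hfiber : {j ∈ (univ : Finset (Fin n)) | cycle j = cycle i} = orbitOf σ i := by
    ext j
    simp only [cycle, orbitOf, mem_filter, mem_univ, true_and, Quotient.eq]
    exact Equiv.Perm.sameCycle_comm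
  calc ∑ j ∈ {j ∈ (univ : Finset (Fin n)) | cycle j = cycle i}, v j * g j
      = ∑ j ∈ orbitOf σ i, v j * g i := by
        rw [hfiber]
        refine Finset.sum_congr rfl fun j hj => ?_
        rw [hg i j (by simpa [orbitOf] using hj)]
    _ = 0 := by rw [← Finset.sum_mul, hv i, zero_mul]

theorem even_fixed_hermitian_orthogonal_general {F : Type*} [Field F] (r : ℕ)
    {n : ℕ} (σ : Equiv.Perm (Fin n))
    (C : Submodule F (Fin n → F)) :
    ∀ v ∈ evenCode σ C, ∀ w ∈ fixedCode σ C, ∑ i, v i * (w i) ^ r = 0 := by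
  rintro v ⟨-, hv⟩ w ⟨-, hw⟩
  refine sum_mul_eq_zero_of_sum_orbitOf_eq_zero σ hv fun i j hij => ?_
  rw [Equiv.Perm.SameCycle.apply_eq_of_comp_eq hw hij]

/-- Let `F` be a finite field with `r²` elements, `r` a power of the
characteristic `p`, with conjugation `a ↦ a^r`. For a linear code `C` over `F` with a
permutation automorphism `σ`, the subcodes `E_σ(C)` and `F_σ(C)` are orthogonal with respect
to the Hermitian inner product `(v,w) = ∑ i, v i * (w i)^r`. -/
theorem even_fixed_hermitian_orthogonal {F : Type*} [Field F] [Fintype F] (p r : ℕ)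
    [CharP F p] (hr : ∃ a : ℕ, r = p ^ a) (hcard : Fintype.card F = r ^ 2)
    {n : ℕ} (σ : Equiv.Perm (Fin n))
    (C : Submodule F (Fin n → F)) (hC : ∀ v, v ∈ C ↔ permAct σ v ∈ C) :
    ∀ v ∈ evenCode σ C, ∀ w ∈ fixedCode σ C, ∑ i, v i * (w i) ^ r = 0 :=
  even_fixed_hermitian_orthogonal_general r σ C
end

section
/- Let F be a finite field of characteristic p, let C be a linear code of length n over F with a permutation automorphism σ, and suppose every cycle of σ has length congruent to l modulo p, where l ≢ 0 (mod p). If C is self-orthogonal with respect to the Euclidean inner product, then the projection code C_π = π(F_σ(C)) is also self-orthogonal. -/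
open Finset

/-- The setoid on coordinates whose classes are the cycles (orbits) of `σ`. -/
def cycleSetoid {n : ℕ} (σ : Equiv.Perm (Fin n)) : Setoid (Fin n) :=
  ⟨σ.SameCycle, ⟨fun x => Equiv.Perm.SameCycle.refl σ x, fun h => h.symm, fun h h' => h.trans h'⟩⟩

/-- The set of cycles of `σ` (fixed points counted as cycles of length 1); if `σ` has `s`
cycles then `Cycles σ → F` is a copy of `F^s`. -/
abbrev Cycles {n : ℕ} (σ : Equiv.Perm (Fin n)) : Type :=
  Quotient (cycleSetoid σ)

noncomputable instance {n : ℕ} (σ : Equiv.Perm (Fin n)) : Fintype (Cycles σ) :=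
  @Fintype.ofFinite _ (Quotient.finite _)

/-- The projection `π` picking one coordinate from each cycle of `σ`; on a `σ`-fixed vector
this is the common value of the vector on each cycle. -/
noncomputable def projPi {F : Type*} {n : ℕ} (σ : Equiv.Perm (Fin n)) (v : Fin n → F) :
    Cycles σ → F :=
  fun c => v c.out

/-! A `σ`-fixed vector is constant on every cycle, so the inner product of two such vectors
is the sum over the cycles of (cycle length) × (product of the projected entries). All cycle
lengths are `≡ l (mod p)`, so in characteristic `p` this reads `u·v = l · (π u · π v)`, and
`l ≠ 0` in `F` turns `u·v = 0` into `π u · π v = 0`. -/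

lemma apply_eq_of_permAct_eq_self {F : Type*} {n : ℕ} {σ : Equiv.Perm (Fin n)} {v : Fin n → F}
    (hv : permAct σ v = v) {i j : Fin n} (hij : σ.SameCycle i j) : v i = v j := by
  obtain ⟨k, -, rfl⟩ := hij.exists_pow_eq'
  rw [Equiv.Perm.coe_pow]
  exact (congrFun (Function.iterate_invariant hv k) i).symm

open Classical in
lemma filter_mk_eq_orbitOf_out {n : ℕ} (σ : Equiv.Perm (Fin n)) (c : Cycles σ) :
    univ.filter (fun i => (Quotient.mk (cycleSetoid σ) i : Cycles σ) = c) = orbitOf σ c.out := by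
  ext i
  conv_lhs => rw [← c.out_eq]
  simp only [mem_filter, mem_univ, true_and, orbitOf, Quotient.eq]
  exact ⟨fun h => h.symm, fun h => h.symm⟩

lemma sum_eq_sum_cycles_sum_orbitOf {M : Type*} [AddCommMonoid M] {n : ℕ}
    (σ : Equiv.Perm (Fin n)) (f : Fin n → M) :
    ∑ i, f i = ∑ c : Cycles σ, ∑ i ∈ orbitOf σ c.out, f i := by
  classical
  rw [← Finset.sum_fiberwise univ (fun i => (Quotient.mk (cycleSetoid σ) i : Cycles σ)) f]
  simp only [filter_mk_eq_orbitOf_out]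

lemma eInner_eq_sum_card_orbitOf_mul {F : Type*} [Field F] {n : ℕ} {σ : Equiv.Perm (Fin n)}
    {u v : Fin n → F} (hu : permAct σ u = u) (hv : permAct σ v = v) :
    eInner u v = ∑ c : Cycles σ, ((orbitOf σ c.out).card : F) * (projPi σ u c * projPi σ v c) := by
  rw [eInner, sum_eq_sum_cycles_sum_orbitOf σ]
  refine sum_congr rfl fun c _ => ?_
  rw [← nsmul_eq_mul, ← sum_const]
  refine sum_congr rfl fun i hi => ?_
  have hc : σ.SameCycle c.out i := by simpa [orbitOf] using hi
  rw [projPi, projPi, apply_eq_of_permAct_eq_self hu hc, apply_eq_of_permAct_eq_self hv hc]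

lemma eInner_eq_mul_eInner_projPi {F : Type*} [Field F] (p : ℕ) [CharP F p] {n : ℕ}
    {σ : Equiv.Perm (Fin n)} (l : ℕ) (hcyc : ∀ i : Fin n, (orbitOf σ i).card ≡ l [MOD p])
    {u v : Fin n → F} (hu : permAct σ u = u) (hv : permAct σ v = v) :
    eInner u v = l * eInner (projPi σ u) (projPi σ v) := by
  rw [eInner_eq_sum_card_orbitOf_mul hu hv, eInner, mul_sum]
  simp only [CharP.natCast_eq_natCast' F p (hcyc _)]

theorem proj_code_of_code_general {F : Type*} [Field F] (p : ℕ) [CharP F p]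
    {n : ℕ} (σ : Equiv.Perm (Fin n)) (C : Submodule F (Fin n → F))
    (l : ℕ) (hl : ¬ l ≡ 0 [MOD p])
    (hcyc : ∀ i : Fin n, (orbitOf σ i).card ≡ l [MOD p])
    (h : IsSelfOrthogonalSet (C : Set (Fin n → F))) :
    IsSelfOrthogonalSet (projPi σ '' fixedCode σ C) := by
  rintro _ ⟨u, ⟨huC, hu⟩, rfl⟩ _ ⟨v, ⟨hvC, hv⟩, rfl⟩
  have hlF : (l : F) ≠ 0 := by
    rwa [Ne, ← Nat.cast_zero, CharP.natCast_eq_natCast F p]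
  have huv : eInner u v = 0 := h huC v hvC
  rw [eInner_eq_mul_eInner_projPi p l hcyc hu hv] at huv
  exact (mul_eq_zero.1 huv).resolve_left hlF

/-- Let `C` be a linear code over a finite field of characteristic `p` with
a permutation automorphism `σ`, all of whose cycles have length congruent to `l ≢ 0 (mod p)`.
If `C` is self-orthogonal with respect to the Euclidean inner product, then so is the projection
code `C_π = π(F_σ(C))`. -/
theorem proj_code_of_code {F : Type*} [Field F] [Fintype F] (p : ℕ) [CharP F p]
    {n : ℕ} (σ : Equiv.Perm (Fin n)) (C : Submodule F (Fin n → F))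
    (hC : ∀ v, v ∈ C ↔ permAct σ v ∈ C)
    (l : ℕ) (hl : ¬ l ≡ 0 [MOD p])
    (hcyc : ∀ i : Fin n, (orbitOf σ i).card ≡ l [MOD p])
    (h : IsSelfOrthogonalSet (C : Set (Fin n → F))) :
    IsSelfOrthogonalSet (projPi σ '' fixedCode σ C) :=
  proj_code_of_code_general p σ C l hl hcyc h
end

section
/- Let F be a finite field of characteristic p and let C be a quasi-cyclic code over F of length sm and index s, where p does not divide m. Then: (1) if C is Euclidean self-orthogonal, so is C_π; (2) if C is Euclidean self-dual, so is C_π; (3) if C is Euclidean LCD, so is C_π. -/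
/-!
Fixed vectors are constant on blocks, so for a fixed `u` the product `u · w` equals
`π(u) · ψ(w)`, where `ψ` sums each block; for fixed `u, v` this is `m · (π(u) · π(v))`.
Since `m` is invertible in `F`, orthogonality of fixed codewords is equivalent to
orthogonality of their projections. Conversely, `ψ(w)` lies in `C_π` for every `w ∈ C`, being
the projection of the orbit sum of `w` under `σ`; hence a fixed vector whose projection is
orthogonal to `C_π` is orthogonal to `C`. For self-duality, apply this to the block-constant
lift of a vector of `C_π^⊥`.
-/

open Finset

/-- The quasi-cyclic shift permutation action on `F^{sm}` (coordinates indexed by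
`(i,j) ∈ {1,…,s} × Z_m`): the coordinate of `vσ` at `(i,j)` is `v (i, j+1)`. -/
def qcShift {F : Type*} {s m : ℕ} (v : Fin s × ZMod m → F) : Fin s × ZMod m → F :=
  fun ij => v (ij.1, ij.2 + 1)

/-- The projection `π : F^{sm} → F^s`; on a shift-fixed vector it returns the common value
on each block. -/
def qcPi {F : Type*} {s m : ℕ} (v : Fin s × ZMod m → F) : Fin s → F :=
  fun i => v (i, 0)

/-- The map `ψ : F^{sm} → F^s`, `ψ(v) i = ∑_{j ∈ Z_m} v (i,j)`. -/
def qcPsi {F : Type*} [Field F] {s m : ℕ} [NeZero m] (v : Fin s × ZMod m → F) : Fin s → F :=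
  fun i => ∑ j : ZMod m, v (i, j)

lemma qcShift_fixed_apply {α : Type*} {s m : ℕ} [NeZero m] {v : Fin s × ZMod m → α}
    (hv : qcShift v = v) (i : Fin s) (j : ZMod m) : v (i, j) = v (i, 0) := by
  obtain ⟨n, rfl⟩ := ZMod.natCast_zmod_surjective j
  induction n with
  | zero => simp
  | succ n ih => rw [Nat.cast_succ, ← ih]; exact congrFun hv (i, n)

section Fixed

variable {F : Type*} [Field F] {s m : ℕ} [NeZero m]

lemma eInner_eq_eInner_qcPi_qcPsi {u : Fin s × ZMod m → F} (hu : qcShift u = u)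
    (w : Fin s × ZMod m → F) : eInner u w = eInner (qcPi u) (qcPsi w) := by
  unfold eInner qcPi qcPsi
  rw [Fintype.sum_prod_type]
  refine sum_congr rfl fun i _ => ?_
  rw [mul_sum]
  exact sum_congr rfl fun j _ => by rw [qcShift_fixed_apply hu]

lemma qcPsi_eq_smul_qcPi {v : Fin s × ZMod m → F} (hv : qcShift v = v) :
    qcPsi v = (m : F) • qcPi v := by
  funext i
  simp [qcPsi, qcPi, qcShift_fixed_apply hv i, ZMod.card]

lemma eInner_eq_mul_eInner_qcPi {u v : Fin s × ZMod m → F} (hu : qcShift u = u)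
    (hv : qcShift v = v) : eInner u v = m * eInner (qcPi u) (qcPi v) := by
  rw [eInner_eq_eInner_qcPi_qcPsi hu, qcPsi_eq_smul_qcPi hv]
  simp only [eInner, mul_sum, Pi.smul_apply, smul_eq_mul, mul_left_comm]

def qcOrbitSum (w : Fin s × ZMod m → F) : Fin s × ZMod m → F :=
  fun ij => ∑ k : ZMod m, w (ij.1, ij.2 + k)

lemma qcShift_qcOrbitSum (w : Fin s × ZMod m → F) : qcShift (qcOrbitSum w) = qcOrbitSum w := by
  funext ij
  exact Fintype.sum_equiv (Equiv.addLeft 1) _ _ fun k => by simp [add_assoc]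

lemma qcPi_qcOrbitSum (w : Fin s × ZMod m → F) : qcPi (qcOrbitSum w) = qcPsi w := by
  funext i
  simp [qcPi, qcOrbitSum, qcPsi]

lemma qcOrbitSum_mem {C : Submodule F (Fin s × ZMod m → F)}
    (hC : ∀ v ∈ C, qcShift v ∈ C) {w : Fin s × ZMod m → F} (hw : w ∈ C) :
    qcOrbitSum w ∈ C := by
  have hshift : ∀ k : ZMod m, (fun ij : Fin s × ZMod m => w (ij.1, ij.2 + k)) ∈ C := by
    intro k
    obtain ⟨n, rfl⟩ := ZMod.natCast_zmod_surjective k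
    induction n with
    | zero => simpa using hw
    | succ n ih =>
      convert hC _ ih using 1
      funext ij
      simp only [qcShift, Nat.cast_succ]
      ring_nf
  have hsum : qcOrbitSum w = ∑ k : ZMod m, fun ij : Fin s × ZMod m => w (ij.1, ij.2 + k) := by
    funext ij
    simp [qcOrbitSum]
  rw [hsum]
  exact C.sum_mem fun k _ => hshift k

end Fixed

section ProjCode

variable {F : Type*} [Field F] {s m : ℕ} [NeZero m] {C : Submodule F (Fin s × ZMod m → F)}

/-- The projected code `C_π = π(F_σ(C))`. -/
def qcProjCode (C : Submodule F (Fin s × ZMod m → F)) : Set (Fin s → F) :=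
  qcPi '' {v | v ∈ C ∧ qcShift v = v}

lemma qcPsi_mem_qcProjCode (hC : ∀ v ∈ C, qcShift v ∈ C) {w : Fin s × ZMod m → F}
    (hw : w ∈ C) : qcPsi w ∈ qcProjCode C :=
  ⟨qcOrbitSum w, ⟨qcOrbitSum_mem hC hw, qcShift_qcOrbitSum w⟩, qcPi_qcOrbitSum w⟩

lemma mem_dualSet_of_qcPi_mem_dualSet (hC : ∀ v ∈ C, qcShift v ∈ C)
    {u : Fin s × ZMod m → F} (hu : qcShift u = u) (h : qcPi u ∈ dualSet (qcProjCode C)) :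
    u ∈ dualSet (C : Set (Fin s × ZMod m → F)) := fun w hw => by
  rw [eInner_eq_eInner_qcPi_qcPsi hu]
  exact h _ (qcPsi_mem_qcProjCode hC hw)

lemma isSelfOrthogonalSet_qcProjCode (hm : (m : F) ≠ 0)
    (h : IsSelfOrthogonalSet (C : Set (Fin s × ZMod m → F))) :
    IsSelfOrthogonalSet (qcProjCode C) := by
  rintro _ ⟨u, ⟨huC, hu⟩, rfl⟩ _ ⟨v, ⟨hvC, hv⟩, rfl⟩
  have huv : (m : F) * eInner (qcPi u) (qcPi v) = 0 := by
    rw [← eInner_eq_mul_eInner_qcPi hu hv]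
    exact h huC v hvC
  exact (mul_eq_zero.mp huv).resolve_left hm

lemma isSelfDualSet_qcProjCode (hm : (m : F) ≠ 0) (hC : ∀ v ∈ C, qcShift v ∈ C)
    (h : IsSelfDualSet (C : Set (Fin s × ZMod m → F))) : IsSelfDualSet (qcProjCode C) := by
  refine (isSelfOrthogonalSet_qcProjCode hm h.le).antisymm fun a ha => ?_
  have hfix : qcShift (fun ij : Fin s × ZMod m => a ij.1) = fun ij => a ij.1 := rfl
  have hmem : (fun ij : Fin s × ZMod m => a ij.1) ∈ (C : Set (Fin s × ZMod m → F)) := by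
    rw [h]
    exact mem_dualSet_of_qcPi_mem_dualSet hC hfix ha
  exact ⟨_, ⟨hmem, hfix⟩, rfl⟩

lemma isLCDSet_qcProjCode (hC : ∀ v ∈ C, qcShift v ∈ C)
    (h : IsLCDSet (C : Set (Fin s × ZMod m → F))) : IsLCDSet (qcProjCode C) := by
  refine Set.Subset.antisymm ?_ ?_
  · rintro _ ⟨⟨u, ⟨huC, hu⟩, rfl⟩, hdual⟩
    have hu0 : u ∈ (C : Set (Fin s × ZMod m → F)) ∩ dualSet C :=
      ⟨huC, mem_dualSet_of_qcPi_mem_dualSet hC hu hdual⟩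
    rw [h, Set.mem_singleton_iff] at hu0
    rw [hu0]
    rfl
  · rintro _ rfl
    exact ⟨⟨0, ⟨C.zero_mem, rfl⟩, rfl⟩, fun v _ => by simp [eInner]⟩

end ProjCode

theorem qc_proj_code_general {F : Type*} [Field F] (p : ℕ) [CharP F p]
    {s m : ℕ} [NeZero m] (hm : ¬ p ∣ m)
    (C : Submodule F (Fin s × ZMod m → F))
    (hC : ∀ v, v ∈ C ↔ qcShift v ∈ C) :
    (IsSelfOrthogonalSet (C : Set (Fin s × ZMod m → F)) →
      IsSelfOrthogonalSet (qcPi '' {v | v ∈ C ∧ qcShift v = v})) ∧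
    (IsSelfDualSet (C : Set (Fin s × ZMod m → F)) →
      IsSelfDualSet (qcPi '' {v | v ∈ C ∧ qcShift v = v})) ∧
    (IsLCDSet (C : Set (Fin s × ZMod m → F)) →
      IsLCDSet (qcPi '' {v | v ∈ C ∧ qcShift v = v})) := by
  have hm' : (m : F) ≠ 0 := fun h => hm ((CharP.cast_eq_zero_iff F p m).mp h)
  have hC' : ∀ v ∈ C, qcShift v ∈ C := fun v => (hC v).mp
  exact ⟨isSelfOrthogonalSet_qcProjCode hm', isSelfDualSet_qcProjCode hm' hC',
    isLCDSet_qcProjCode hC'⟩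

/-- Let `C` be a quasi-cyclic code over a finite field of characteristic `p`
of length `sm` and index `s`, where `p ∤ m`. Then `C_π = π(F_σ(C))` inherits being
self-orthogonal, self-dual, and LCD (Euclidean inner product) from `C`. -/
theorem qc_proj_code {F : Type*} [Field F] [Fintype F] (p : ℕ) [CharP F p]
    {s m : ℕ} [NeZero m] (hm : ¬ p ∣ m)
    (C : Submodule F (Fin s × ZMod m → F))
    (hC : ∀ v, v ∈ C ↔ qcShift v ∈ C) :
    (IsSelfOrthogonalSet (C : Set (Fin s × ZMod m → F)) →
      IsSelfOrthogonalSet (qcPi '' {v | v ∈ C ∧ qcShift v = v})) ∧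
    (IsSelfDualSet (C : Set (Fin s × ZMod m → F)) →
      IsSelfDualSet (qcPi '' {v | v ∈ C ∧ qcShift v = v})) ∧
    (IsLCDSet (C : Set (Fin s × ZMod m → F)) →
      IsLCDSet (qcPi '' {v | v ∈ C ∧ qcShift v = v})) :=
  qc_proj_code_general p hm C hC
end

section
/- Let F be a finite field of characteristic p with m ≡ 1 (mod p), and let C be a linear code of length n = cm + f over F with a permutation automorphism σ of type m-(c,f), i.e. σ is a product of c disjoint cycles of length m together with f fixed points. Then: (1) if C is Euclidean self-orthogonal, so is C_π; (2) if C is Euclidean self-dual, so is C_π; (3) if C is Euclidean LCD, so is C_π. -/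
open Finset

/-- The permutation action of a permutation of type `m-(c,f)` (c disjoint `m`-cycles and `f`
fixed points) on `F^{cm+f}`, where coordinates are indexed by `(Fin c × ZMod m) ⊕ Fin f`. -/
def aqcShift {F : Type*} {c m f : ℕ} (v : (Fin c × ZMod m) ⊕ Fin f → F) :
    (Fin c × ZMod m) ⊕ Fin f → F :=
  fun x => match x with
  | .inl ij => v (.inl (ij.1, ij.2 + 1))
  | .inr j => v (.inr j)

/-- The projection `π : F^{cm+f} → F^{c+f}`; on a `σ`-fixed vector it returns the common value
on each cycle (fixed points counted as cycles of length 1). -/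
def aqcPi {F : Type*} {c m f : ℕ} (v : (Fin c × ZMod m) ⊕ Fin f → F) :
    Fin c ⊕ Fin f → F :=
  fun x => match x with
  | .inl i => v (.inl (i, 0))
  | .inr j => v (.inr j)

/-- The fixed subcode `F_σ(C)` for a permutation of type `m-(c,f)`. -/
def aqcFixedCode {F : Type*} [Field F] {c m f : ℕ}
    (C : Submodule F ((Fin c × ZMod m) ⊕ Fin f → F)) : Set ((Fin c × ZMod m) ⊕ Fin f → F) :=
  {v | v ∈ C ∧ aqcShift v = v}

/-- The subcode `E_σ(C)` for a permutation of type `m-(c,f)`: codewords whose coordinate sum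
over every cycle (including the singleton cycles at the fixed points) vanishes. -/
def aqcEvenCode {F : Type*} [Field F] {c m f : ℕ} [NeZero m]
    (C : Submodule F ((Fin c × ZMod m) ⊕ Fin f → F)) : Set ((Fin c × ZMod m) ⊕ Fin f → F) :=
  {v | v ∈ C ∧ (∀ i : Fin c, ∑ j : ZMod m, v (.inl (i, j)) = 0) ∧ (∀ j : Fin f, v (.inr j) = 0)}


/-! A `σ`-fixed vector is constant on each cycle, so for fixed `u`, `v` every cycle contributes
`m` equal products to `u · v`; as `m = 1` in `F`, `π` preserves inner products on `F_σ(C)`, which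
carries self-orthogonality over to `C_π`. For the other two properties, the lift `w̃` of any
`w ∈ C_π^⊥` (constant on cycles) lies in `C^⊥`: for `u ∈ C` the orbit sum `Tu = ∑_{k<m} uσ^k` is a
`σ`-fixed codeword and `w̃ · u = m (w̃ · u) = w̃ · Tu = w · π(Tu) = 0`. Hence `C = C^⊥` forces
`C_π^⊥ ⊆ C_π`, and a fixed `v ∈ C` with `π v ∈ C_π^⊥` lies in `C ∩ C^⊥ = {0}`. -/

section PermutationAction

variable {ι : Type*}

def orbitSum {M : Type*} [AddCommMonoid M] (e : Equiv.Perm ι) (m : ℕ) (u : ι → M) : ι → M :=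
  ∑ k ∈ range m, u ∘ ⇑(e ^ k)

variable {e : Equiv.Perm ι}

lemma comp_perm_pow_eq_self {α : Type*} {v : ι → α} (hv : v ∘ e = v) (k : ℕ) :
    v ∘ ⇑(e ^ k) = v := by
  induction k with
  | zero => rfl
  | succ k ih => rw [pow_succ', Equiv.Perm.coe_mul, ← Function.comp_assoc, hv, ih]

lemma orbitSum_comp {M : Type*} [AddCommMonoid M] {m : ℕ} (he : e ^ m = 1) (u : ι → M) :
    orbitSum e m u ∘ e = orbitSum e m u := by
  have hshift : orbitSum e m u ∘ e = ∑ k ∈ range m, u ∘ ⇑(e ^ (k + 1)) := by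
    funext x
    simp only [orbitSum, Function.comp_apply, Finset.sum_apply, pow_succ, Equiv.Perm.coe_mul]
  rw [hshift]
  cases m with
  | zero => rfl
  | succ n => rw [sum_range_succ, he, orbitSum, sum_range_succ' _ n, pow_zero]

variable {F : Type*} [Field F]

lemma comp_perm_pow_mem {C : Submodule F (ι → F)} (hC : ∀ v ∈ C, v ∘ e ∈ C) {u : ι → F}
    (hu : u ∈ C) (k : ℕ) : u ∘ ⇑(e ^ k) ∈ C := by
  induction k with
  | zero => exact hu
  | succ k ih => rw [pow_succ, Equiv.Perm.coe_mul, ← Function.comp_assoc]; exact hC _ ih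

lemma orbitSum_mem {C : Submodule F (ι → F)} (hC : ∀ v ∈ C, v ∘ e ∈ C) (m : ℕ) {u : ι → F}
    (hu : u ∈ C) : orbitSum e m u ∈ C :=
  C.sum_mem fun k _ => comp_perm_pow_mem hC hu k

variable [Fintype ι]

lemma eInner_comp_perm (u v : ι → F) : eInner (u ∘ e) (v ∘ e) = eInner u v :=
  Equiv.sum_comp e fun i => u i * v i

lemma eInner_sum_right {κ : Type*} (v : ι → F) (s : Finset κ) (g : κ → ι → F) :
    eInner v (∑ k ∈ s, g k) = ∑ k ∈ s, eInner v (g k) :=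
  dotProduct_sum v s g

lemma eInner_orbitSum {v : ι → F} (hv : v ∘ e = v) (m : ℕ) (u : ι → F) :
    eInner v (orbitSum e m u) = m * eInner v u := by
  have hterm (k : ℕ) : eInner v (u ∘ ⇑(e ^ k)) = eInner v u := by
    conv_lhs => rw [← comp_perm_pow_eq_self hv k]
    exact eInner_comp_perm v u
  simp only [orbitSum, eInner_sum_right, hterm, sum_const, card_range, nsmul_eq_mul]

end PermutationAction

section Aqc

variable {c m f : ℕ}

def aqcPerm : Equiv.Perm ((Fin c × ZMod m) ⊕ Fin f) :=
  Equiv.sumCongr (Equiv.prodCongr (Equiv.refl _) (Equiv.addRight 1)) (Equiv.refl _)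

lemma aqcShift_eq_comp {α : Type*} (v : (Fin c × ZMod m) ⊕ Fin f → α) :
    aqcShift v = v ∘ aqcPerm := by
  funext x; cases x <;> rfl

lemma aqcPerm_pow_inl (k : ℕ) (i : Fin c) (j : ZMod m) :
    (aqcPerm ^ k : Equiv.Perm ((Fin c × ZMod m) ⊕ Fin f)) (.inl (i, j)) = .inl (i, j + k) := by
  induction k with
  | zero => simp
  | succ k ih =>
    rw [pow_succ', Equiv.Perm.mul_apply, ih, Nat.cast_succ, ← add_assoc]
    rfl

lemma aqcPerm_pow_inr (k : ℕ) (j : Fin f) :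
    (aqcPerm ^ k : Equiv.Perm ((Fin c × ZMod m) ⊕ Fin f)) (.inr j) = .inr j := by
  induction k with
  | zero => rfl
  | succ k ih => rw [pow_succ', Equiv.Perm.mul_apply, ih]; rfl

lemma aqcPerm_pow_self : (aqcPerm : Equiv.Perm ((Fin c × ZMod m) ⊕ Fin f)) ^ m = 1 := by
  ext x
  rcases x with ⟨i, j⟩ | j
  · rw [aqcPerm_pow_inl, ZMod.natCast_self, add_zero]; rfl
  · rw [aqcPerm_pow_inr]; rfl

lemma apply_inl_eq_of_aqcShift_eq [NeZero m] {α : Type*} {v : (Fin c × ZMod m) ⊕ Fin f → α}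
    (hv : aqcShift v = v) (i : Fin c) (j : ZMod m) : v (.inl (i, j)) = v (.inl (i, 0)) := by
  have hfix : v ∘ aqcPerm = v := (aqcShift_eq_comp v).symm.trans hv
  have hcomp := congrFun (comp_perm_pow_eq_self hfix j.val) (.inl (i, 0))
  rwa [Function.comp_apply, aqcPerm_pow_inl, zero_add, ZMod.natCast_zmod_val] at hcomp

def aqcLift {α : Type*} (w : Fin c ⊕ Fin f → α) : (Fin c × ZMod m) ⊕ Fin f → α :=
  w ∘ Sum.map Prod.fst id

lemma aqcShift_aqcLift {α : Type*} (w : Fin c ⊕ Fin f → α) :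
    aqcShift (aqcLift (m := m) w) = aqcLift w := by
  funext x; cases x <;> rfl

lemma aqcPi_aqcLift {α : Type*} (w : Fin c ⊕ Fin f → α) : aqcPi (aqcLift (m := m) w) = w := by
  funext x; cases x <;> rfl

lemma aqcLift_aqcPi [NeZero m] {α : Type*} {v : (Fin c × ZMod m) ⊕ Fin f → α}
    (hv : aqcShift v = v) : aqcLift (aqcPi v) = v := by
  funext x
  rcases x with ⟨i, j⟩ | j
  · exact (apply_inl_eq_of_aqcShift_eq hv i j).symm
  · rfl

variable {F : Type*} [Field F] [NeZero m]

lemma eInner_aqcPi (hm1 : (m : F) = 1) {u v : (Fin c × ZMod m) ⊕ Fin f → F}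
    (hu : aqcShift u = u) (hv : aqcShift v = v) : eInner (aqcPi u) (aqcPi v) = eInner u v := by
  have hcycle (i : Fin c) :
      ∑ j : ZMod m, u (.inl (i, j)) * v (.inl (i, j)) = u (.inl (i, 0)) * v (.inl (i, 0)) := by
    simp only [apply_inl_eq_of_aqcShift_eq hu i, apply_inl_eq_of_aqcShift_eq hv i, sum_const,
      card_univ, ZMod.card, nsmul_eq_mul, hm1, one_mul]
  simp only [eInner, Fintype.sum_sum_type, Fintype.sum_prod_type, hcycle]
  rfl

lemma aqcLift_mem_dualSet (hm1 : (m : F) = 1) {C : Submodule F ((Fin c × ZMod m) ⊕ Fin f → F)}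
    (hC : ∀ v ∈ C, aqcShift v ∈ C) {w : Fin c ⊕ Fin f → F}
    (hw : w ∈ dualSet (aqcPi '' aqcFixedCode C)) :
    aqcLift w ∈ dualSet (C : Set ((Fin c × ZMod m) ⊕ Fin f → F)) := by
  intro u hu
  have hlift : aqcLift w ∘ aqcPerm = aqcLift (m := m) w := by
    rw [← aqcShift_eq_comp, aqcShift_aqcLift]
  have hCcomp : ∀ v ∈ C, v ∘ aqcPerm ∈ C := fun v hv => aqcShift_eq_comp v ▸ hC v hv
  have hT : aqcShift (orbitSum aqcPerm m u) = orbitSum aqcPerm m u := by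
    rw [aqcShift_eq_comp, orbitSum_comp aqcPerm_pow_self]
  calc eInner (aqcLift w) u = m * eInner (aqcLift w) u := by rw [hm1, one_mul]
    _ = eInner (aqcPi (aqcLift w)) (aqcPi (orbitSum aqcPerm m u)) := by
      rw [← eInner_orbitSum hlift m u, eInner_aqcPi hm1 (aqcShift_aqcLift w) hT]
    _ = 0 := by
      rw [aqcPi_aqcLift]
      exact hw _ ⟨_, ⟨orbitSum_mem hCcomp m hu, hT⟩, rfl⟩

end Aqc

section Projection

variable {F : Type*} [Field F] {c m f : ℕ} [NeZero m]
  {C : Submodule F ((Fin c × ZMod m) ⊕ Fin f → F)}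

lemma IsSelfOrthogonalSet.aqcPi_image (hm1 : (m : F) = 1)
    (hSO : IsSelfOrthogonalSet (C : Set ((Fin c × ZMod m) ⊕ Fin f → F))) :
    IsSelfOrthogonalSet (aqcPi '' aqcFixedCode C) := by
  rintro _ ⟨u, ⟨huC, hu⟩, rfl⟩ _ ⟨v, ⟨hvC, hv⟩, rfl⟩
  rw [eInner_aqcPi hm1 hu hv]
  exact hSO huC v hvC

lemma IsSelfDualSet.aqcPi_image (hm1 : (m : F) = 1) (hC : ∀ v ∈ C, aqcShift v ∈ C)
    (hSD : IsSelfDualSet (C : Set ((Fin c × ZMod m) ⊕ Fin f → F))) :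
    IsSelfDualSet (aqcPi '' aqcFixedCode C) := by
  refine (IsSelfOrthogonalSet.aqcPi_image hm1 hSD.le).antisymm fun w hw => ?_
  have hlift : aqcLift w ∈ (C : Set ((Fin c × ZMod m) ⊕ Fin f → F)) :=
    hSD ▸ aqcLift_mem_dualSet hm1 hC hw
  exact ⟨aqcLift w, ⟨hlift, aqcShift_aqcLift w⟩, aqcPi_aqcLift w⟩

lemma IsLCDSet.aqcPi_image (hm1 : (m : F) = 1) (hC : ∀ v ∈ C, aqcShift v ∈ C)
    (hLCD : IsLCDSet (C : Set ((Fin c × ZMod m) ⊕ Fin f → F))) :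
    IsLCDSet (aqcPi '' aqcFixedCode C) := by
  have hPi0 : aqcPi (0 : (Fin c × ZMod m) ⊕ Fin f → F) = 0 := by
    funext x; cases x <;> rfl
  refine Set.Subset.antisymm ?_ (Set.singleton_subset_iff.mpr ⟨?_, ?_⟩)
  · rintro _ ⟨⟨v, ⟨hvC, hv⟩, rfl⟩, hdual⟩
    have hvdual : v ∈ dualSet (C : Set ((Fin c × ZMod m) ⊕ Fin f → F)) :=
      aqcLift_aqcPi hv ▸ aqcLift_mem_dualSet hm1 hC hdual
    have hv0 : v = 0 := hLCD.subset ⟨hvC, hvdual⟩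
    rw [hv0, hPi0]
    rfl
  · exact ⟨0, ⟨C.zero_mem, by funext x; cases x <;> rfl⟩, hPi0⟩
  · intro _ _
    exact zero_dotProduct _

end Projection

theorem aqc_proj_code_general {F : Type*} [Field F] (p : ℕ) [CharP F p]
    {c m f : ℕ} [NeZero m] (hm : m ≡ 1 [MOD p])
    (C : Submodule F ((Fin c × ZMod m) ⊕ Fin f → F))
    (hC : ∀ v, v ∈ C ↔ aqcShift v ∈ C) :
    (IsSelfOrthogonalSet (C : Set ((Fin c × ZMod m) ⊕ Fin f → F)) →
      IsSelfOrthogonalSet (aqcPi '' aqcFixedCode C)) ∧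
    (IsSelfDualSet (C : Set ((Fin c × ZMod m) ⊕ Fin f → F)) →
      IsSelfDualSet (aqcPi '' aqcFixedCode C)) ∧
    (IsLCDSet (C : Set ((Fin c × ZMod m) ⊕ Fin f → F)) →
      IsLCDSet (aqcPi '' aqcFixedCode C)) := by
  have hm1 : (m : F) = 1 := by simpa using (CharP.natCast_eq_natCast F p).mpr hm
  have hσ : ∀ v ∈ C, aqcShift v ∈ C := fun v => (hC v).mp
  exact ⟨IsSelfOrthogonalSet.aqcPi_image hm1, IsSelfDualSet.aqcPi_image hm1 hσ,
    IsLCDSet.aqcPi_image hm1 hσ⟩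

/-- Let `F` be a finite field of characteristic `p` with `m ≡ 1 (mod p)`,
and let `C` be a linear code of length `n = cm + f` over `F` with a permutation automorphism
`σ` of type `m-(c,f)`. Then `C_π = π(F_σ(C))` inherits being self-orthogonal, self-dual,
and LCD (Euclidean inner product) from `C`. -/
theorem aqc_proj_code {F : Type*} [Field F] [Fintype F] (p : ℕ) [CharP F p]
    {c m f : ℕ} [NeZero m] (hm : m ≡ 1 [MOD p])
    (C : Submodule F ((Fin c × ZMod m) ⊕ Fin f → F))
    (hC : ∀ v, v ∈ C ↔ aqcShift v ∈ C) :
    (IsSelfOrthogonalSet (C : Set ((Fin c × ZMod m) ⊕ Fin f → F)) →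
      IsSelfOrthogonalSet (aqcPi '' aqcFixedCode C)) ∧
    (IsSelfDualSet (C : Set ((Fin c × ZMod m) ⊕ Fin f → F)) →
      IsSelfDualSet (aqcPi '' aqcFixedCode C)) ∧
    (IsLCDSet (C : Set ((Fin c × ZMod m) ⊕ Fin f → F)) →
      IsLCDSet (aqcPi '' aqcFixedCode C)) :=
  aqc_proj_code_general p hm C hC
end

section
/- Let F be a finite field and let C₁, C₂ be linear codes of length n over F such that C₁ ∩ C₂ = {0} and C₁ is orthogonal to C₂ with respect to the Euclidean inner product (u·v = 0 for all u ∈ C₁, v ∈ C₂). Set C = C₁ ⊕ C₂ (the internal direct sum C₁ + C₂). Then C is an LCD code if and only if both C₁ and C₂ are LCD codes. -/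
open Finset

open Matrix

section LCD

variable {F : Type*} [Field F] {ι : Type*} [Fintype ι]

lemma eInner_eq_dotProduct (u v : ι → F) : eInner u v = u ⬝ᵥ v := rfl

lemma eInner_comm (u v : ι → F) : eInner u v = eInner v u := dotProduct_comm u v

lemma eInner_add_left (u w v : ι → F) : eInner (u + w) v = eInner u v + eInner w v :=
  add_dotProduct u w v

lemma eInner_add_right (u v w : ι → F) : eInner u (v + w) = eInner u v + eInner u w :=
  dotProduct_add u v w

lemma zero_mem_dualSet (S : Set (ι → F)) : (0 : ι → F) ∈ dualSet S := fun v _ => by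
  rw [eInner_eq_dotProduct, zero_dotProduct]

lemma subset_dualSet_comm {S T : Set (ι → F)} : S ⊆ dualSet T ↔ T ⊆ dualSet S :=
  ⟨fun h v hv u hu => eInner_comm v u ▸ h hu v hv, fun h u hu v hv => eInner_comm u v ▸ h hv u hu⟩

variable {C D : Submodule F (ι → F)}

lemma isLCDSet_iff :
    IsLCDSet (C : Set (ι → F)) ↔ ∀ x ∈ C, x ∈ dualSet (C : Set (ι → F)) → x = 0 := by
  rw [IsLCDSet, Set.eq_singleton_iff_unique_mem]
  exact ⟨fun h x hx hxd => h.2 x ⟨hx, hxd⟩,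
    fun h => ⟨⟨C.zero_mem, zero_mem_dualSet _⟩, fun x hx => h x hx.1 hx.2⟩⟩

lemma dualSet_sup :
    dualSet ((C ⊔ D : Submodule F (ι → F)) : Set (ι → F)) =
      dualSet (C : Set (ι → F)) ∩ dualSet (D : Set (ι → F)) := by
  ext x
  refine ⟨fun hx => ⟨fun v hv => hx v (Submodule.mem_sup_left hv),
    fun v hv => hx v (Submodule.mem_sup_right hv)⟩, ?_⟩
  rintro ⟨hxC, hxD⟩ _ hv
  obtain ⟨a, ha, b, hb, rfl⟩ := Submodule.mem_sup.mp hv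
  rw [eInner_add_right, hxC a ha, hxD b hb, add_zero]

lemma IsLCDSet.of_sup (hCD : (C : Set (ι → F)) ⊆ dualSet (D : Set (ι → F)))
    (h : IsLCDSet ((C ⊔ D : Submodule F (ι → F)) : Set (ι → F))) :
    IsLCDSet (C : Set (ι → F)) := by
  rw [isLCDSet_iff] at h ⊢
  intro x hx hxC
  exact h x (Submodule.mem_sup_left hx) (by rw [dualSet_sup]; exact ⟨hxC, hCD hx⟩)

/-- The dual condition on `a + b` splits into one on `a` and one on `b`, since each of the
cross terms `a·v` (`v ∈ D`) and `b·v` (`v ∈ C`) vanishes. -/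
lemma IsLCDSet.sup (hCD : (C : Set (ι → F)) ⊆ dualSet (D : Set (ι → F)))
    (hC : IsLCDSet (C : Set (ι → F))) (hD : IsLCDSet (D : Set (ι → F))) :
    IsLCDSet ((C ⊔ D : Submodule F (ι → F)) : Set (ι → F)) := by
  have hDC := subset_dualSet_comm.mp hCD
  rw [isLCDSet_iff] at hC hD ⊢
  intro x hx hxd
  rw [dualSet_sup] at hxd
  obtain ⟨a, ha, b, hb, rfl⟩ := Submodule.mem_sup.mp hx
  have ha₀ : a = 0 := hC a ha fun v hv => by
    simpa only [eInner_add_left, hDC hb v hv, add_zero] using hxd.1 v hv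
  have hb₀ : b = 0 := hD b hb fun v hv => by
    simpa only [eInner_add_left, hCD ha v hv, zero_add] using hxd.2 v hv
  rw [ha₀, hb₀, add_zero]

end LCD

theorem direct_sum_code_iff_general {F : Type*} [Field F] {n : ℕ}
    (C₁ C₂ : Submodule F (Fin n → F))
    (horth : ∀ u ∈ C₁, ∀ v ∈ C₂, eInner u v = 0) :
    IsLCDSet ((C₁ ⊔ C₂ : Submodule F (Fin n → F)) : Set (Fin n → F)) ↔
      (IsLCDSet (C₁ : Set (Fin n → F)) ∧ IsLCDSet (C₂ : Set (Fin n → F))) := by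
  have h₁₂ : (C₁ : Set (Fin n → F)) ⊆ dualSet (C₂ : Set (Fin n → F)) := horth
  have h₂₁ := subset_dualSet_comm.mp h₁₂
  refine ⟨fun h => ⟨h.of_sup h₁₂, IsLCDSet.of_sup h₂₁ (sup_comm C₁ C₂ ▸ h)⟩, ?_⟩
  rintro ⟨h₁, h₂⟩
  exact h₁.sup h₁₂ h₂

/-- Let `C₁, C₂` be linear codes of length `n` over a finite field with
`C₁ ∩ C₂ = {0}` and `C₁ ⊥ C₂` (Euclidean inner product), and let `C = C₁ ⊕ C₂`. Then
`C` is an LCD code if and only if both `C₁` and `C₂` are. -/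
theorem direct_sum_code_iff {F : Type*} [Field F] [Fintype F] {n : ℕ}
    (C₁ C₂ : Submodule F (Fin n → F)) (hint : C₁ ⊓ C₂ = ⊥)
    (horth : ∀ u ∈ C₁, ∀ v ∈ C₂, eInner u v = 0) :
    IsLCDSet ((C₁ ⊔ C₂ : Submodule F (Fin n → F)) : Set (Fin n → F)) ↔
      (IsLCDSet (C₁ : Set (Fin n → F)) ∧ IsLCDSet (C₂ : Set (Fin n → F))) :=
  direct_sum_code_iff_general C₁ C₂ horth
end

section
/- Let F be a finite field and let C be a quasi-cyclic code over F of length sm and index s. If C is self-orthogonal with respect to the Euclidean inner product, then the code C_ψ = ψ(C) ⊆ F^s is also self-orthogonal. -/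
open Finset

lemma sum_mul_sum_eq_sum_sum_mul_add {R G : Type*} [CommSemiring R] [AddCommGroup G] [Fintype G]
    (f g : G → R) : (∑ j, f j) * (∑ j, g j) = ∑ k, ∑ j, f j * g (j + k) := by
  rw [sum_comm, sum_mul_sum]
  exact sum_congr rfl fun j _ => (Equiv.sum_comp (Equiv.addLeft j) _).symm

lemma eInner_qcPsi {F : Type*} [Field F] {s m : ℕ} [NeZero m] (u v : Fin s × ZMod m → F) :
    eInner (qcPsi u) (qcPsi v) = ∑ k : ZMod m, eInner u (fun ij => v (ij.1, ij.2 + k)) := by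
  simp only [eInner, qcPsi, sum_mul_sum_eq_sum_sum_mul_add, Fintype.sum_prod_type]
  exact sum_comm

lemma qcShift_iterate {F : Type*} {s m : ℕ} (v : Fin s × ZMod m → F) (n : ℕ) :
    qcShift^[n] v = fun ij => v (ij.1, ij.2 + n) := by
  induction n with
  | zero => simp
  | succ n ih =>
    rw [Function.iterate_succ_apply', ih]
    funext ij
    simp only [qcShift]
    rw [Nat.cast_succ, add_right_comm, add_assoc]

theorem psi_image_self_orthogonal_general {F : Type*} [Field F] {s m : ℕ} [NeZero m]
    (C : Submodule F (Fin s × ZMod m → F)) (hC : ∀ v, v ∈ C ↔ qcShift v ∈ C)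
    (hso : IsSelfOrthogonalSet (C : Set (Fin s × ZMod m → F))) :
    IsSelfOrthogonalSet (qcPsi '' (C : Set (Fin s × ZMod m → F))) := by
  rintro _ ⟨u, hu, rfl⟩ _ ⟨v, hv, rfl⟩
  have hshift : Set.MapsTo qcShift (C : Set (Fin s × ZMod m → F)) C := fun w hw => (hC w).mp hw
  rw [eInner_qcPsi]
  refine sum_eq_zero fun k _ => ?_
  have hk := hso hu _ (hshift.iterate k.val hv)
  rwa [qcShift_iterate, ZMod.natCast_zmod_val] at hk

/-- If a quasi-cyclic code `C` of length `sm` and index `s` over a finite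
field is self-orthogonal with respect to the Euclidean inner product, then so is
`C_ψ = ψ(C) ⊆ F^s`. -/
theorem psi_image_self_orthogonal {F : Type*} [Field F] [Fintype F] {s m : ℕ} [NeZero m]
    (C : Submodule F (Fin s × ZMod m → F)) (hC : ∀ v, v ∈ C ↔ qcShift v ∈ C)
    (hso : IsSelfOrthogonalSet (C : Set (Fin s × ZMod m → F))) :
    IsSelfOrthogonalSet (qcPsi '' (C : Set (Fin s × ZMod m → F))) :=
  psi_image_self_orthogonal_general C hC hso
end

section
/- Let F be a finite field and let C be a quasi-cyclic code over F of length sm and index s. If C is self-orthogonal with respect to the Euclidean inner product, then C_π = π(F_σ(C)) is contained in the dual code C_ψ^⊥ of C_ψ = ψ(C) in F^s. -/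
open Finset

section QuasiCyclic

variable {F : Type*} {s m : ℕ}

theorem qcShift_eq_self_iff_periodic (v : Fin s × ZMod m → F) :
    qcShift v = v ↔ ∀ i, Function.Periodic (fun j => v (i, j)) 1 :=
  ⟨fun h i j => congrFun h (i, j), fun h => funext fun ij => h ij.1 ij.2⟩

theorem apply_eq_qcPi_of_qcShift_eq_self {v : Fin s × ZMod m → F} (hv : qcShift v = v)
    (i : Fin s) (j : ZMod m) : v (i, j) = qcPi v i := by
  obtain ⟨n, rfl⟩ := ZMod.intCast_surjective j
  simpa [qcPi] using ((qcShift_eq_self_iff_periodic v).1 hv i).zsmul n 0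

theorem eInner_qcPi_qcPsi [Field F] [NeZero m] {v : Fin s × ZMod m → F} (hv : qcShift v = v)
    (w : Fin s × ZMod m → F) : eInner (qcPi v) (qcPsi w) = eInner v w := by
  simp only [eInner, qcPsi, Finset.mul_sum, Fintype.sum_prod_type,
    apply_eq_qcPi_of_qcShift_eq_self hv]

end QuasiCyclic

theorem pi_image_subset_dual_psi_image_general {F : Type*} [Field F] {s m : ℕ} [NeZero m]
    (C : Submodule F (Fin s × ZMod m → F))
    (hso : IsSelfOrthogonalSet (C : Set (Fin s × ZMod m → F))) :
    qcPi '' {v | v ∈ C ∧ qcShift v = v} ⊆ dualSet (qcPsi '' (C : Set (Fin s × ZMod m → F))) := by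
  rintro _ ⟨v, ⟨hvC, hv⟩, rfl⟩ _ ⟨w, hwC, rfl⟩
  rw [eInner_qcPi_qcPsi hv]
  exact hso hvC w hwC

/-- If a quasi-cyclic code `C` of length `sm` and index `s` over a finite
field is self-orthogonal with respect to the Euclidean inner product, then
`C_π = π(F_σ(C))` is contained in the dual code of `C_ψ = ψ(C)` in `F^s`. -/
theorem pi_image_subset_dual_psi_image {F : Type*} [Field F] [Fintype F] {s m : ℕ} [NeZero m]
    (C : Submodule F (Fin s × ZMod m → F)) (hC : ∀ v, v ∈ C ↔ qcShift v ∈ C)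
    (hso : IsSelfOrthogonalSet (C : Set (Fin s × ZMod m → F))) :
    qcPi '' {v | v ∈ C ∧ qcShift v = v} ⊆ dualSet (qcPsi '' (C : Set (Fin s × ZMod m → F))) :=
  pi_image_subset_dual_psi_image_general C hso
end
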